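/- arXiv:1710.01969 — 2 statements merged into one kernel-verified Lean document; each statement's English description precedes it below -/
import Mathlib

section
/- Let n ≥ 2, k ≥ 4 log₂ n, and let (b_i)_{0 ≤ i ≤ k-1} be integers. Then the system of equations (k - i)·y_i + (i+1)·y_{i+1} = b_i for 0 ≤ i ≤ k-1, subject to y_i ≥ 0 for all i and Σ_{i=0}^{k} y_i ≤ n, has at most one integer solution (y_0,...,y_k). -/
/-!
The difference `z = y - y'` of two solutions solves the homogeneous recurrence
`(k - i) z_i + (i + 1) z_{i+1} = 0`, whose solutions are `z_i = (-1)^i C(k, i) z_0`.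
If `z_0 ≠ 0` this forces `∑ |z_i| ≥ ∑ C(k, i) = 2^k`, whereas nonnegativity and the norm
bounds give `∑ |z_i| ≤ 2n`, and `2n < n^4 ≤ 2^k` because `k ≥ 4 log₂ n`.
-/

open Finset

section BinomialRecurrence

variable {R : Type*}

theorem eq_neg_one_pow_mul_choose_of_recurrence [CommRing R] [IsDomain R] [CharZero R]
    {k : ℕ} {z : ℕ → R} (hz : ∀ i < k, ((k : R) - i) * z i + ((i : R) + 1) * z (i + 1) = 0) :
    ∀ i ≤ k, z i = (-1) ^ i * k.choose i * z 0 := by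
  intro i
  induction i with
  | zero => simp
  | succ i ih =>
    intro hi
    have hik : i < k := hi
    have hchoose := congrArg (Nat.cast (R := R)) (Nat.choose_succ_right_eq k i)
    push_cast [Nat.cast_sub hik.le] at hchoose
    refine mul_left_cancel₀ (Nat.cast_add_one_ne_zero i) ?_
    linear_combination hz i hik - ((k : R) - i) * ih hik.le +
      ((-1) ^ i * z 0) * hchoose

theorem sum_abs_eq_two_pow_mul_abs_of_recurrence
    [CommRing R] [LinearOrder R] [IsStrictOrderedRing R]
    {k : ℕ} {z : ℕ → R} (hz : ∀ i < k, ((k : R) - i) * z i + ((i : R) + 1) * z (i + 1) = 0) :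
    ∑ i ∈ range (k + 1), |z i| = 2 ^ k * |z 0| := by
  have hsol := eq_neg_one_pow_mul_choose_of_recurrence hz
  calc ∑ i ∈ range (k + 1), |z i| = ∑ i ∈ range (k + 1), (k.choose i : R) * |z 0| := by
        refine sum_congr rfl fun i hi => ?_
        rw [hsol i (Nat.lt_succ_iff.mp (mem_range.mp hi))]
        simp [abs_mul]
    _ = 2 ^ k * |z 0| := by
        rw [← sum_mul, ← Nat.cast_sum, Nat.sum_range_choose, Nat.cast_pow, Nat.cast_ofNat]

end BinomialRecurrence

theorem recurrence_eq_zero_of_sum_abs_lt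
    {k : ℕ} {z : ℕ → ℤ} (hz : ∀ i < k, ((k : ℤ) - i) * z i + ((i : ℤ) + 1) * z (i + 1) = 0)
    (hsmall : ∑ i ∈ range (k + 1), |z i| < 2 ^ k) :
    ∀ i ≤ k, z i = 0 := by
  have hz0 : z 0 = 0 := by
    by_contra hne
    rw [sum_abs_eq_two_pow_mul_abs_of_recurrence hz] at hsmall
    have : (2 : ℤ) ^ k * 1 ≤ 2 ^ k * |z 0| := by
      gcongr
      exact Int.one_le_abs hne
    linarith
  intro i hi
  simp [eq_neg_one_pow_mul_choose_of_recurrence hz i hi, hz0]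

theorem pow_le_pow_of_mul_logb_le {b x : ℝ} {m k : ℕ} (hb : 1 < b) (hx : 0 < x)
    (h : m * Real.logb b x ≤ k) : x ^ m ≤ b ^ k := by
  rw [← Real.logb_pow, Real.logb_le_iff_le_rpow hb (by positivity)] at h
  exact_mod_cast h

theorem sum_abs_sub_le_add {ι α : Type*} [AddCommGroup α] [LinearOrder α] [IsOrderedAddMonoid α]
    (s : Finset ι) {f g : ι → α} (hf : ∀ i ∈ s, 0 ≤ f i) (hg : ∀ i ∈ s, 0 ≤ g i) :
    ∑ i ∈ s, |f i - g i| ≤ ∑ i ∈ s, f i + ∑ i ∈ s, g i := by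
  rw [← sum_add_distrib]
  refine sum_le_sum fun i hi => ?_
  simpa only [abs_of_nonneg (hf i hi), abs_of_nonneg (hg i hi)] using abs_sub (f i) (g i)

/-- Uniqueness (case `d = 1`): the inhomogeneous system with nonnegativity and
ℓ¹-norm constraints has at most one integer solution. -/
theorem stmt5 (n k : ℕ) (hn : 2 ≤ n) (hk : (4 : ℝ) * Real.logb 2 n ≤ k)
    (b : ℕ → ℤ) (y y' : ℕ → ℤ)
    (hy : ∀ i < k, ((k : ℤ) - i) * y i + ((i : ℤ) + 1) * y (i + 1) = b i)
    (hy' : ∀ i < k, ((k : ℤ) - i) * y' i + ((i : ℤ) + 1) * y' (i + 1) = b i)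
    (hpos : ∀ i ≤ k, 0 ≤ y i) (hpos' : ∀ i ≤ k, 0 ≤ y' i)
    (hsum : ∑ i ∈ Finset.range (k + 1), y i ≤ (n : ℤ))
    (hsum' : ∑ i ∈ Finset.range (k + 1), y' i ≤ (n : ℤ)) :
    ∀ i ≤ k, y i = y' i := by
  have hdiff : ∀ i < k, ((k : ℤ) - i) * (y i - y' i) + ((i : ℤ) + 1) * (y (i + 1) - y' (i + 1))
      = 0 := fun i hi => by linear_combination hy i hi - hy' i hi
  have hn4 : (n : ℤ) ^ 4 ≤ 2 ^ k := by
    exact_mod_cast pow_le_pow_of_mul_logb_le (b := 2) (x := n) (m := 4) one_lt_two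
      (by exact_mod_cast (by omega : 0 < n)) (by exact_mod_cast hk)
  have htwo_mul : 2 * (n : ℤ) < n ^ 4 := by
    have hn' : (2 : ℤ) ≤ n := by exact_mod_cast hn
    nlinarith [pow_le_pow_left₀ (by norm_num) hn' 3]
  have hsmall : ∑ i ∈ range (k + 1), |y i - y' i| < 2 ^ k :=
    calc ∑ i ∈ range (k + 1), |y i - y' i|
        ≤ ∑ i ∈ range (k + 1), y i + ∑ i ∈ range (k + 1), y' i :=
          sum_abs_sub_le_add _ (fun i hi => hpos i (Nat.lt_succ_iff.mp (mem_range.mp hi)))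
            (fun i hi => hpos' i (Nat.lt_succ_iff.mp (mem_range.mp hi)))
      _ ≤ 2 * n := by linarith
      _ < 2 ^ k := htwo_mul.trans_le hn4
  intro i hi
  exact sub_eq_zero.mp (recurrence_eq_zero_of_sum_abs_lt hdiff hsmall i hi)
end

section
/- Let n ≥ 2, d ≥ 1, k > 4^d log₂ n − d with d ≥ 2, and suppose integers (z_e)_{e ∈ ℕ^d, |e| ≤ k} satisfy the homogeneous equations (k−|e|)·z_e + Σ_s (e_s+1)·z_{e+δ_s} = 0 for |e| ≤ k−1 and z_e = 0 whenever |e| < k₀, where k₀ = min{i : some z_e with |e| = i is nonzero}. Then the restricted variables z'_f = z_{(f_1,...,f_{d-1}, k₀−|f|)} for f ∈ ℕ^{d-1}, |f| ≤ k₀, satisfy the (d−1)-dimensional homogeneous system with parameter k₀: for all |f| ≤ k₀ − 1, (k₀ − |f|)·z'_f + Σ_{s=1}^{d-1} (f_s+1)·z'_{f+δ_s} = 0. -/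
/-!
Write `k₀ = c + 1`. At a point `e = (f, c - |f|)` of level `c` the term `(k - |e|) z_e` of the
equation drops out because `z_e = 0`, and the upper neighbours of `e` are exactly the slice
points: `e + δ_s = (f + δ_s, k₀ - |f + δ_s|)` for `s < d` and `e + δ_d = (f, k₀ - |f|)`, the
latter with coefficient `e_d + 1 = k₀ - |f|`.
-/

open Finset Function

namespace HomogeneousSlice

variable {m : ℕ}

def slice (c : ℕ) (f : Fin m → ℕ) : Fin (m + 1) → ℕ :=
  Fin.snoc f (c - ∑ u, f u)

theorem dite_eq_slice (c : ℕ) (f : Fin m → ℕ) :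
    (fun s : Fin (m + 1) => if h : (s : ℕ) < m then f ⟨s, h⟩ else c - ∑ u, f u) = slice c f := by
  funext s
  induction s using Fin.lastCases <;> simp [slice]

theorem sum_slice {c : ℕ} {f : Fin m → ℕ} (hf : ∑ u, f u ≤ c) : ∑ s, slice c f s = c := by
  rw [Fin.sum_univ_castSucc]
  simp only [slice, Fin.snoc_castSucc, Fin.snoc_last]
  omega

theorem sum_update_succ (f : Fin m → ℕ) (s : Fin m) :
    ∑ u, update f s (f s + 1) u = ∑ u, f u + 1 := by
  rw [sum_update_of_mem (mem_univ s), ← add_sum_erase _ _ (mem_univ s),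
    sdiff_singleton_eq_erase]
  ring

theorem slice_succ {c : ℕ} {f : Fin m → ℕ} (hf : ∑ u, f u ≤ c) :
    slice (c + 1) f = update (slice c f) (Fin.last m) (slice c f (Fin.last m) + 1) := by
  simp only [slice, Fin.snoc_last, Fin.update_snoc_last]
  congr 1
  omega

theorem slice_succ_update {c : ℕ} {f : Fin m → ℕ} (hf : ∑ u, f u ≤ c) (s : Fin m) :
    slice (c + 1) (update f s (f s + 1)) =
      update (slice c f) s.castSucc (slice c f s.castSucc + 1) := by
  simp only [slice, Fin.snoc_castSucc, ← Fin.snoc_update, sum_update_succ]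
  congr 1
  omega

theorem sum_upper_neighbours_slice {R : Type*} [Ring R] (z : (Fin (m + 1) → ℕ) → R)
    {c : ℕ} {f : Fin m → ℕ} (hf : ∑ u, f u ≤ c) :
    ∑ s, ((slice c f s : R) + 1) * z (update (slice c f) s (slice c f s + 1)) =
      (((c + 1 : ℕ) : R) - ∑ u, f u) * z (slice (c + 1) f) +
        ∑ s, ((f s : R) + 1) * z (slice (c + 1) (update f s (f s + 1))) := by
  have hlast : ((c + 1 : ℕ) : R) - ∑ u, f u = ((slice c f (Fin.last m) : ℕ) : R) + 1 := by
    rw [slice, Fin.snoc_last]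
    push_cast [Nat.cast_sub hf]
    abel
  rw [Fin.sum_univ_castSucc, add_comm, hlast, slice_succ hf]
  simp only [slice_succ_update hf]
  simp only [slice, Fin.snoc_castSucc]

end HomogeneousSlice

open HomogeneousSlice

theorem stmt18_general (d k k₀ : ℕ) (hd : 2 ≤ d)
    (hk₀ : k₀ ≤ k)
    (z : (Fin d → ℕ) → ℤ)
    (hrec : ∀ e : Fin d → ℕ, (∑ s, e s) ≤ k - 1 →
      ((k : ℤ) - (∑ s, e s)) * z e +
        ∑ s, ((e s : ℤ) + 1) * z (Function.update e s (e s + 1)) = 0)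
    (hmin : ∀ e : Fin d → ℕ, (∑ s, e s) < k₀ → z e = 0)
    (z' : (Fin (d - 1) → ℕ) → ℤ)
    (hz' : ∀ f : Fin (d - 1) → ℕ, z' f =
      z (fun s : Fin d => if h : (s : ℕ) < d - 1 then f ⟨s, h⟩ else k₀ - ∑ u, f u)) :
    ∀ f : Fin (d - 1) → ℕ, (∑ u, f u) < k₀ →
      ((k₀ : ℤ) - (∑ u, f u)) * z' f +
        ∑ s, ((f s : ℤ) + 1) * z' (Function.update f s (f s + 1)) = 0 := by
  obtain ⟨m, rfl⟩ : ∃ m, d = m + 1 := ⟨d - 1, by omega⟩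
  show ∀ f : Fin m → ℕ, (∑ u, f u) < k₀ →
      ((k₀ : ℤ) - (∑ u, f u)) * z' f + ∑ s, ((f s : ℤ) + 1) * z' (update f s (f s + 1)) = 0
  intro f hf
  obtain ⟨c, rfl⟩ : ∃ c, k₀ = c + 1 := ⟨k₀ - 1, by omega⟩
  have hz'_slice (g : Fin m → ℕ) : z' g = z (slice (c + 1) g) :=
    (hz' g).trans (congrArg z (dite_eq_slice (c + 1) g))
  have hcf : ∑ u, f u ≤ c := by omega
  have hlevel := hrec (slice c f) (by rw [sum_slice hcf]; omega)
  rw [hmin (slice c f) (by rw [sum_slice hcf]; omega), mul_zero, zero_add,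
    sum_upper_neighbours_slice z hcf] at hlevel
  simpa only [hz'_slice] using hlevel

/-- Step (a) of the induction in Lemma A.2: if `z` solves the `d`-dimensional
homogeneous system and vanishes strictly below its first nonzero level `k₀`, then
the slice `z'_f = z_{(f, k₀ - |f|)}` solves the `(d-1)`-dimensional homogeneous
system with parameter `k₀`. -/
theorem stmt18 (n d k k₀ : ℕ) (hn : 2 ≤ n) (hd : 2 ≤ d)
    (hk : (4 : ℝ) ^ d * Real.logb 2 n - d < k) (hk₀ : k₀ ≤ k)
    (z : (Fin d → ℕ) → ℤ)
    (hrec : ∀ e : Fin d → ℕ, (∑ s, e s) ≤ k - 1 →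
      ((k : ℤ) - (∑ s, e s)) * z e +
        ∑ s, ((e s : ℤ) + 1) * z (Function.update e s (e s + 1)) = 0)
    (hmin : ∀ e : Fin d → ℕ, (∑ s, e s) < k₀ → z e = 0)
    (hex : ∃ e : Fin d → ℕ, (∑ s, e s) = k₀ ∧ z e ≠ 0)
    (z' : (Fin (d - 1) → ℕ) → ℤ)
    (hz' : ∀ f : Fin (d - 1) → ℕ, z' f =
      z (fun s : Fin d => if h : (s : ℕ) < d - 1 then f ⟨s, h⟩ else k₀ - ∑ u, f u)) :
    ∀ f : Fin (d - 1) → ℕ, (∑ u, f u) < k₀ →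
      ((k₀ : ℤ) - (∑ u, f u)) * z' f +
        ∑ s, ((f s : ℤ) + 1) * z' (Function.update f s (f s + 1)) = 0 :=
  stmt18_general d k k₀ hd hk₀ z hrec hmin z' hz'
end
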